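/- arXiv:2208.13207 — 4 statements merged into one kernel-verified Lean document; each statement's English description precedes it below -/
import Mathlib

section
/- Let k be a positive integer and let (X, Y) be a k-biplex in a bipartite graph G = (L ∪ R, E). If |X| ≥ 2k+1 and |Y| ≥ 2k+1, then the induced bipartite subgraph G[X ∪ Y] is connected. -/
/-!
Two vertices on the same side of a `k`-biplex each miss at most `k` of the `≥ 2k+1` vertices
on the other side, so they have a common neighbour there; and every vertex has a neighbour on
the other side. Hence any fixed vertex of `X` reaches all of `X` in two steps and all of `Y`
in three.
-/

open Finset

namespace Finset

variable {α : Type*} {s : Finset α} {p q : α → Prop} [DecidablePred p] [DecidablePred q]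

theorem exists_mem_of_card_filter_not_lt (h : #(s.filter fun a => ¬ p a) < #s) :
    ∃ a ∈ s, p a := by
  have hpos : 0 < #(s.filter p) := by
    have := card_filter_add_card_filter_not (s := s) p
    omega
  obtain ⟨a, ha⟩ := card_pos.mp hpos
  exact ⟨a, mem_filter.mp ha⟩

theorem exists_mem_and_of_card_filter_not_add_lt
    (h : #(s.filter fun a => ¬ p a) + #(s.filter fun a => ¬ q a) < #s) :
    ∃ a ∈ s, p a ∧ q a := by
  classical
  refine exists_mem_of_card_filter_not_lt (lt_of_le_of_lt ?_ h)
  calc #(s.filter fun a => ¬ (p a ∧ q a))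
      = #((s.filter fun a => ¬ p a) ∪ s.filter fun a => ¬ q a) := by
        simp only [not_and_or, filter_or]
    _ ≤ _ := card_union_le _ _

end Finset

namespace SimpleGraph

variable {V : Type*} {G : SimpleGraph V}

theorem induce_union_connected_of_forall_exists_adj {X Y : Set V} (hX : X.Nonempty)
    (hXX : ∀ x ∈ X, ∀ x' ∈ X, ∃ y ∈ Y, G.Adj x y ∧ G.Adj x' y)
    (hYX : ∀ y ∈ Y, ∃ x ∈ X, G.Adj x y) :
    (G.induce (X ∪ Y)).Connected := by
  obtain ⟨x₀, hx₀⟩ := hX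
  have reach_of_adj {a b : V} (ha : a ∈ X ∪ Y) (hb : b ∈ X ∪ Y) (h : G.Adj a b) :
      (G.induce (X ∪ Y)).Reachable ⟨a, ha⟩ ⟨b, hb⟩ :=
    Adj.reachable (G := G.induce (X ∪ Y)) h
  have reach_X (x : V) (hx : x ∈ X) :
      (G.induce (X ∪ Y)).Reachable ⟨x₀, .inl hx₀⟩ ⟨x, .inl hx⟩ := by
    obtain ⟨y, hy, h₀, h⟩ := hXX x₀ hx₀ x hx
    exact (reach_of_adj _ (.inr hy) h₀).trans (reach_of_adj _ _ h.symm)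
  refine (connected_iff_exists_forall_reachable _).2 ⟨⟨x₀, .inl hx₀⟩, ?_⟩
  rintro ⟨v, hv | hv⟩
  · exact reach_X v hv
  · obtain ⟨x, hx, hxv⟩ := hYX v hv
    exact (reach_X x hx).trans (reach_of_adj _ _ hxv)

theorem fromRel_adj_of_disjoint {L R : Finset V} (hLR : Disjoint L R)
    {E : V → V → Prop} (hE : ∀ v u, E v u → v ∈ L ∧ u ∈ R) {x y : V} (hxy : E x y) :
    (fromRel E).Adj x y := by
  refine (fromRel_adj E x y).2 ⟨?_, .inl hxy⟩
  rintro rfl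
  exact Finset.disjoint_left.mp hLR (hE x x hxy).1 (hE x x hxy).2

end SimpleGraph

theorem kbiplex_connected_general {V : Type*} [DecidableEq V]
    (L R : Finset V) (hLR : Disjoint L R)
    (E : V → V → Prop) [DecidableRel E]
    (hE : ∀ v u, E v u → v ∈ L ∧ u ∈ R)
    (k : ℕ)
    (X Y : Finset V)
    (hbX : ∀ x ∈ X, (Y.filter fun y => ¬ E x y).card ≤ k)
    (hbY : ∀ y ∈ Y, (X.filter fun x => ¬ E x y).card ≤ k)
    (hXcard : 2 * k + 1 ≤ X.card) (hYcard : 2 * k + 1 ≤ Y.card) :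
    ((SimpleGraph.fromRel E).induce (↑(X ∪ Y) : Set V)).Connected := by
  have adj {x y} (h : E x y) := SimpleGraph.fromRel_adj_of_disjoint hLR hE h
  rw [coe_union]
  refine SimpleGraph.induce_union_connected_of_forall_exists_adj ?_ ?_ ?_
  · exact coe_nonempty.mpr (card_pos.mp (by omega))
  · intro x hx x' hx'
    obtain ⟨y, hy, h, h'⟩ := exists_mem_and_of_card_filter_not_add_lt
      (p := (E x ·)) (q := (E x' ·)) (by have := hbX x hx; have := hbX x' hx'; omega : _ < #Y)
    exact ⟨y, hy, adj h, adj h'⟩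
  · intro y hy
    obtain ⟨x, hx, h⟩ := exists_mem_of_card_filter_not_lt (p := (E · y))
      (by have := hbY y hy; omega : _ < #X)
    exact ⟨x, hx, adj h⟩

/-- Let `k` be a positive integer and `(X, Y)` a `k`-biplex in a bipartite
graph `G = (L ∪ R, E)`.  If `|X| ≥ 2k+1` and `|Y| ≥ 2k+1`, then the induced bipartite
subgraph `G[X ∪ Y]` is connected. -/
theorem kbiplex_connected {V : Type*} [Fintype V] [DecidableEq V]
    (L R : Finset V) (hLR : Disjoint L R)
    (E : V → V → Prop) [DecidableRel E]
    (hE : ∀ v u, E v u → v ∈ L ∧ u ∈ R)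
    (k : ℕ) (hk : 1 ≤ k)
    (X Y : Finset V) (hX : X ⊆ L) (hY : Y ⊆ R)
    (hbX : ∀ x ∈ X, (Y.filter fun y => ¬ E x y).card ≤ k)
    (hbY : ∀ y ∈ Y, (X.filter fun x => ¬ E x y).card ≤ k)
    (hXcard : 2 * k + 1 ≤ X.card) (hYcard : 2 * k + 1 ≤ Y.card) :
    ((SimpleGraph.fromRel E).induce (↑(X ∪ Y) : Set V)).Connected :=
  kbiplex_connected_general L R hLR E hE k X Y hbX hbY hXcard hYcard
end

section
/- (Correctness of the branch upper bounds τ_L and τ_R.) Let k be a positive integer and let S_L, C_L ⊆ L and S_R, C_R ⊆ R with S_L and S_R nonempty. Define τ_L = min_{u ∈ S_R} δ(u, S_L ∪ C_L) + k and τ_R = min_{v ∈ S_L} δ(v, S_R ∪ C_R) + k. Then every k-biplex (X, Y) with S_L ⊆ X ⊆ S_L ∪ C_L and S_R ⊆ Y ⊆ S_R ∪ C_R satisfies |X| ≤ τ_L, |Y| ≤ τ_R, and the number of edges of G between X and Y is at most τ_L · τ_R. -/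
/-!
A vertex `u` fixed in the biplex misses at most `k` vertices of the other side, so that side
consists of neighbours of `u` among the still-available vertices plus at most `k` others.
Choosing `u` to minimise its available degree gives `|X| ≤ τ_L` and `|Y| ≤ τ_R`, and the edges
between `X` and `Y` number at most `|X| · |Y|`.
-/

open Finset

theorem Finset.card_le_card_filter_add_of_subset {α : Type*} {p : α → Prop} [DecidablePred p]
    {X A : Finset α} {k : ℕ} (hXA : X ⊆ A) (hk : (X.filter fun a => ¬ p a).card ≤ k) :
    X.card ≤ (A.filter p).card + k := by
  have hsplit := card_filter_add_card_filter_not (s := X) (p := p)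
  have hpos : (X.filter p).card ≤ (A.filter p).card := card_le_card (filter_subset_filter _ hXA)
  omega

theorem Finset.card_le_inf'_card_filter_add {α β : Type*} (p : β → α → Prop)
    [∀ u, DecidablePred (p u)] {S : Finset β} (hS : S.Nonempty) {X A : Finset α} {k : ℕ}
    (hXA : X ⊆ A) (hk : ∀ u ∈ S, (X.filter fun a => ¬ p u a).card ≤ k) :
    X.card ≤ S.inf' hS (fun u => (A.filter (p u)).card) + k := by
  obtain ⟨u, hu, hmin⟩ := exists_mem_eq_inf' hS fun u => (A.filter (p u)).card
  rw [hmin]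
  exact card_le_card_filter_add_of_subset hXA (hk u hu)

theorem branch_upper_bounds_correct_general {V : Type*} [DecidableEq V]
    (E : V → V → Prop) [DecidableRel E]
    (k : ℕ)
    (SL CL SR CR : Finset V)
    (hSLne : SL.Nonempty) (hSRne : SR.Nonempty)
    (X Y : Finset V) (hX1 : SL ⊆ X) (hX2 : X ⊆ SL ∪ CL) (hY1 : SR ⊆ Y) (hY2 : Y ⊆ SR ∪ CR)
    (hbX : ∀ x ∈ X, (Y.filter fun y => ¬ E x y).card ≤ k)
    (hbY : ∀ y ∈ Y, (X.filter fun x => ¬ E x y).card ≤ k) :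
    X.card ≤ SR.inf' hSRne (fun u => ((SL ∪ CL).filter fun v => E v u).card) + k ∧
    Y.card ≤ SL.inf' hSLne (fun v => ((SR ∪ CR).filter fun u => E v u).card) + k ∧
    ((X ×ˢ Y).filter fun p => E p.1 p.2).card ≤
      (SR.inf' hSRne (fun u => ((SL ∪ CL).filter fun v => E v u).card) + k) *
        (SL.inf' hSLne (fun v => ((SR ∪ CR).filter fun u => E v u).card) + k) := by
  have hX : X.card ≤ SR.inf' hSRne (fun u => ((SL ∪ CL).filter fun v => E v u).card) + k :=
    card_le_inf'_card_filter_add (fun u v => E v u) hSRne hX2 fun u hu => hbY u (hY1 hu)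
  have hY : Y.card ≤ SL.inf' hSLne (fun v => ((SR ∪ CR).filter fun u => E v u).card) + k :=
    card_le_inf'_card_filter_add E hSLne hY2 fun v hv => hbX v (hX1 hv)
  refine ⟨hX, hY, ?_⟩
  calc ((X ×ˢ Y).filter fun p => E p.1 p.2).card ≤ (X ×ˢ Y).card := card_filter_le _ _
    _ = X.card * Y.card := card_product X Y
    _ ≤ _ := Nat.mul_le_mul hX hY

/-- **correctness of the branch upper bounds `τ_L` and `τ_R`.**
With `τ_L = min_{u ∈ S_R} δ(u, S_L ∪ C_L) + k` and `τ_R = min_{v ∈ S_L} δ(v, S_R ∪ C_R) + k`,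
every `k`-biplex `(X, Y)` with `S_L ⊆ X ⊆ S_L ∪ C_L` and `S_R ⊆ Y ⊆ S_R ∪ C_R` satisfies
`|X| ≤ τ_L`, `|Y| ≤ τ_R`, and has at most `τ_L · τ_R` edges between `X` and `Y`. -/
theorem branch_upper_bounds_correct {V : Type*} [DecidableEq V]
    (L R : Finset V) (hLR : Disjoint L R)
    (E : V → V → Prop) [DecidableRel E]
    (hE : ∀ v u, E v u → v ∈ L ∧ u ∈ R)
    (k : ℕ) (hk : 1 ≤ k)
    (SL CL SR CR : Finset V)
    (hSL : SL ⊆ L) (hCL : CL ⊆ L) (hSR : SR ⊆ R) (hCR : CR ⊆ R)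
    (hSLne : SL.Nonempty) (hSRne : SR.Nonempty)
    (X Y : Finset V) (hX1 : SL ⊆ X) (hX2 : X ⊆ SL ∪ CL) (hY1 : SR ⊆ Y) (hY2 : Y ⊆ SR ∪ CR)
    (hbX : ∀ x ∈ X, (Y.filter fun y => ¬ E x y).card ≤ k)
    (hbY : ∀ y ∈ Y, (X.filter fun x => ¬ E x y).card ≤ k) :
    X.card ≤ SR.inf' hSRne (fun u => ((SL ∪ CL).filter fun v => E v u).card) + k ∧
    Y.card ≤ SL.inf' hSLne (fun v => ((SR ∪ CR).filter fun u => E v u).card) + k ∧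
    ((X ×ˢ Y).filter fun p => E p.1 p.2).card ≤
      (SR.inf' hSRne (fun u => ((SL ∪ CL).filter fun v => E v u).card) + k) *
        (SL.inf' hSLne (fun v => ((SR ∪ CR).filter fun u => E v u).card) + k) :=
  branch_upper_bounds_correct_general E k SL CL SR CR hSLne hSRne X Y hX1 hX2 hY1 hY2 hbX hbY
end

section
/- (Correctness of pruning condition (4).) Let k be a positive integer, let S_L, C_L ⊆ L and S_R, C_R ⊆ R, and let v ∈ L be a vertex with v ∉ S_L ∪ C_L such that (i) δ̄(v, S_R ∪ C_R) ≤ k, and (ii) every w ∈ S_R ∪ C_R with δ̄(w, S_L ∪ C_L) ≥ k is a neighbor of v. Then for every k-biplex (X, Y) with X ⊆ S_L ∪ C_L and Y ⊆ S_R ∪ C_R, the pair (X ∪ {v}, Y) is also a k-biplex. Consequently, no k-biplex (X, Y) with X ⊆ S_L ∪ C_L and Y ⊆ S_R ∪ C_R is maximal in G if it excludes v. -/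
/-!
Adding `v` to `X` raises the non-neighbour count only of those `w ∈ Y` that `v` misses, and by
(ii) each such `w` has fewer than `k` non-neighbours in `S_L ∪ C_L ⊇ X`; by (i) `v` itself
misses at most `k` vertices of `Y ⊆ S_R ∪ C_R`. Since `v ∉ X`, `(X ∪ {v}, Y)` is then a strictly
larger `k`-biplex.
-/

open Finset

def IsKBiplex {V : Type*} [DecidableEq V] (E : V → V → Prop) [DecidableRel E]
    (k : ℕ) (X Y : Finset V) : Prop :=
  (∀ x ∈ X, (Y.filter fun y => ¬ E x y).card ≤ k) ∧
  (∀ y ∈ Y, (X.filter fun x => ¬ E x y).card ≤ k)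

theorem IsKBiplex.insert_left {V : Type*} [DecidableEq V] {E : V → V → Prop} [DecidableRel E]
    {k : ℕ} {X Y : Finset V} (h : IsKBiplex E k X Y) {v : V}
    (hv : (Y.filter fun y => ¬ E v y).card ≤ k)
    (hslack : ∀ y ∈ Y, ¬ E v y → (X.filter fun x => ¬ E x y).card < k) :
    IsKBiplex E k (insert v X) Y := by
  refine ⟨fun x hx => ?_, fun y hy => ?_⟩
  · rcases mem_insert.mp hx with rfl | hx
    · exact hv
    · exact h.1 x hx
  · rw [filter_insert]
    split_ifs with hvy
    · exact h.2 y hy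
    · exact (card_insert_le _ _).trans (hslack y hy hvy)

theorem pruning_condition_four_correct_general {V : Type*} [DecidableEq V]
    (L R : Finset V)
    (E : V → V → Prop) [DecidableRel E]
    (k : ℕ)
    (SL CL SR CR : Finset V)
    (hSL : SL ⊆ L) (hCL : CL ⊆ L) (hSR : SR ⊆ R) (hCR : CR ⊆ R)
    (v : V) (hvL : v ∈ L) (hv : v ∉ SL ∪ CL)
    (hcond1 : ((SR ∪ CR).filter fun w => ¬ E v w).card ≤ k)
    (hcond2 : ∀ w ∈ SR ∪ CR, k ≤ ((SL ∪ CL).filter fun x => ¬ E x w).card → E v w) :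
    ∀ X Y : Finset V, X ⊆ SL ∪ CL → Y ⊆ SR ∪ CR → IsKBiplex E k X Y →
      IsKBiplex E k (insert v X) Y ∧
      ¬ (∀ X' Y' : Finset V, X' ⊆ L → Y' ⊆ R → X ⊆ X' → Y ⊆ Y' →
          IsKBiplex E k X' Y' → X' = X ∧ Y' = Y) := by
  intro X Y hX hY hXY
  have hvY : (Y.filter fun y => ¬ E v y).card ≤ k :=
    (card_le_card (filter_subset_filter _ hY)).trans hcond1
  have hslack : ∀ y ∈ Y, ¬ E v y → (X.filter fun x => ¬ E x y).card < k := fun y hy hvy =>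
    (card_le_card (filter_subset_filter _ hX)).trans_lt
      (not_le.mp fun hy' => hvy (hcond2 y (hY hy) hy'))
  have hvXY := hXY.insert_left hvY hslack
  refine ⟨hvXY, fun hmax => hv (hX ?_)⟩
  have hvX_eq := (hmax (insert v X) Y (insert_subset hvL (hX.trans (union_subset hSL hCL)))
    (hY.trans (union_subset hSR hCR)) (subset_insert v X) subset_rfl hvXY).1
  exact hvX_eq ▸ mem_insert_self v X

/-- **correctness of pruning condition (4).**
Let `v ∈ L` with `v ∉ S_L ∪ C_L` be such that (i) `δ̄(v, S_R ∪ C_R) ≤ k`, and (ii) every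
`w ∈ S_R ∪ C_R` with `δ̄(w, S_L ∪ C_L) ≥ k` is a neighbor of `v`.  Then for every
`k`-biplex `(X, Y)` with `X ⊆ S_L ∪ C_L` and `Y ⊆ S_R ∪ C_R`, the pair `(X ∪ {v}, Y)` is
also a `k`-biplex; consequently no such `(X, Y)` is a maximal `k`-biplex in `G`. -/
theorem pruning_condition_four_correct {V : Type*} [DecidableEq V]
    (L R : Finset V) (hLR : Disjoint L R)
    (E : V → V → Prop) [DecidableRel E]
    (hE : ∀ v u, E v u → v ∈ L ∧ u ∈ R)
    (k : ℕ) (hk : 1 ≤ k)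
    (SL CL SR CR : Finset V)
    (hSL : SL ⊆ L) (hCL : CL ⊆ L) (hSR : SR ⊆ R) (hCR : CR ⊆ R)
    (v : V) (hvL : v ∈ L) (hv : v ∉ SL ∪ CL)
    (hcond1 : ((SR ∪ CR).filter fun w => ¬ E v w).card ≤ k)
    (hcond2 : ∀ w ∈ SR ∪ CR, k ≤ ((SL ∪ CL).filter fun x => ¬ E x w).card → E v w) :
    ∀ X Y : Finset V, X ⊆ SL ∪ CL → Y ⊆ SR ∪ CR → IsKBiplex E k X Y →
      IsKBiplex E k (insert v X) Y ∧
      ¬ (∀ X' Y' : Finset V, X' ⊆ L → Y' ⊆ R → X ⊆ X' → Y ⊆ Y' →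
          IsKBiplex E k X' Y' → X' = X ∧ Y' = Y) :=
  pruning_condition_four_correct_general L R E k SL CL SR CR hSL hCL hSR hCR v hvL hv hcond1 hcond2
end

section
/- For every integer k ≥ 0 and every real number x ≥ 2, one has x^{k+4} − 2x^{k+3} + x² − x + 1 > 0. Consequently, every real root of the polynomial x^{k+4} − 2x^{k+3} + x² − x + 1 is strictly less than 2; in particular, the exponential base γ_k in the worst-case time complexity O(n · d · γ_k^n) of FastBB is strictly smaller than 2. -/
/-! For `x ≥ 2` the leading part `x^{k+4} − 2x^{k+3} = x^{k+3}(x − 2)` is nonnegative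
and `x² − x + 1` is positive for every real `x`; a root can therefore not lie in `[2, ∞)`. -/

section

variable {R : Type*} [CommRing R] [LinearOrder R] [IsStrictOrderedRing R]

theorem two_mul_pow_le_pow_succ {x : R} (hx : 2 ≤ x) (n : ℕ) : 2 * x ^ n ≤ x ^ (n + 1) := by
  rw [pow_succ, mul_comm 2]
  exact mul_le_mul_of_nonneg_left hx (pow_nonneg (zero_le_two.trans hx) n)

theorem sq_sub_self_add_one_pos (x : R) : 0 < x ^ 2 - x + 1 := by
  nlinarith [sq_nonneg (2 * x - 1)]

end

/-- For every integer `k ≥ 0` and every real `x ≥ 2`,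
`x^{k+4} − 2x^{k+3} + x² − x + 1 > 0`; consequently every real root of this polynomial
is strictly less than `2` (so the base `γ_k` of FastBB is strictly smaller than `2`). -/
theorem fastbb_base_lt_two (k : ℕ) :
    (∀ x : ℝ, 2 ≤ x → 0 < x ^ (k + 4) - 2 * x ^ (k + 3) + x ^ 2 - x + 1) ∧
    (∀ x : ℝ, x ^ (k + 4) - 2 * x ^ (k + 3) + x ^ 2 - x + 1 = 0 → x < 2) := by
  have pos : ∀ x : ℝ, 2 ≤ x → 0 < x ^ (k + 4) - 2 * x ^ (k + 3) + x ^ 2 - x + 1 :=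
    fun x hx => by linarith [two_mul_pow_le_pow_succ hx (k + 3), sq_sub_self_add_one_pos x]
  refine ⟨pos, fun x hroot => ?_⟩
  by_contra! hx
  exact (pos x hx).ne' hroot
end
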